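/- Let (S, (A_i)_{i=1}^m, H, P, (R_i)_{i=1}^m) be a tabular episodic Markov game, π† a deterministic target policy, and R_min = min_{i,h,s} R_{i,h}(s, π†_h(s)) > 0. Suppose the agents are attacked by the mixed attack, they deploy Markov product policies π¹,…,π^K over K episodes with initial states s₁¹,…,s₁^K, and every agent i's best-in-hindsight regret in the post-attack game satisfies Reg_i(K,H) ≤ 𝓡(T) with T = KH. Then the mixed attack forces the agents to follow the target policy with E[Loss1(K,H)] ≤ m·𝓡(T)/R_min and E[Cost(K,H)] ≤ 2m·𝓡(T)/R_min. -/
import Mathlib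


open Finset

namespace MGAttack

variable {S : Type} [Fintype S] [DecidableEq S]
variable {m : ℕ} {A : Fin m → Type} [∀ i, Fintype (A i)] [∀ i, DecidableEq (A i)]

/-- `VA P f π n h s`: expected sum of `f` over `n` steps starting from step `h` in
state `s`, when joint actions are drawn from the joint pmf `π` and states evolve
according to `P`.  With `f` a mean-reward function this is the value function. -/
noncomputable def VA (P : ℕ → S → (∀ i, A i) → S → ℝ) (f : ℕ → S → (∀ i, A i) → ℝ)
    (π : ℕ → S → (∀ i, A i) → ℝ) : ℕ → ℕ → S → ℝ
  | 0, _, _ => 0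
  | n + 1, h, s => ∑ a, π h s a * (f h s a + ∑ s', P h s a s' * VA P f π n (h + 1) s')

/-- Value function `V^π_h(s)` for horizon `H` (steps `h, h+1, …, H`). -/
noncomputable def Vf (P : ℕ → S → (∀ i, A i) → S → ℝ) (R : ℕ → S → (∀ i, A i) → ℝ)
    (π : ℕ → S → (∀ i, A i) → ℝ) (H h : ℕ) (s : S) : ℝ :=
  VA P R π (H + 1 - h) h s

/-- Q-function `Q^π_h(s,a)` for horizon `H`. -/
noncomputable def Qf (P : ℕ → S → (∀ i, A i) → S → ℝ) (R : ℕ → S → (∀ i, A i) → ℝ)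
    (π : ℕ → S → (∀ i, A i) → ℝ) (H h : ℕ) (s : S) (a : ∀ i, A i) : ℝ :=
  R h s a + ∑ s', P h s a s' * VA P R π (H - h) (h + 1) s'

/-- Joint pmf of a Markov product policy. -/
noncomputable def jp (π : ∀ i : Fin m, ℕ → S → A i → ℝ) : ℕ → S → (∀ i, A i) → ℝ :=
  fun h s a => ∏ i, π i h s (a i)

/-- Joint action prescribed by a deterministic (product) policy. -/
def tgtJ (τ : ∀ i : Fin m, ℕ → S → A i) (h : ℕ) (s : S) : ∀ i, A i := fun i => τ i h s

/-- A deterministic policy viewed as a (point-mass) stochastic policy. -/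
noncomputable def detP (τ : ∀ i : Fin m, ℕ → S → A i) : ∀ i : Fin m, ℕ → S → A i → ℝ :=
  fun i h s b => if b = τ i h s then 1 else 0

/-- `P` is a transition kernel for the steps `1, …, H`. -/
def IsKernel (H : ℕ) (P : ℕ → S → (∀ i, A i) → S → ℝ) : Prop :=
  ∀ h ∈ Finset.Icc 1 H, ∀ s a, (∀ s', 0 ≤ P h s a s') ∧ ∑ s', P h s a s' = 1

/-- `π` is a Markov product policy for the steps `1, …, H`. -/
def IsPolicy (H : ℕ) (π : ∀ i : Fin m, ℕ → S → A i → ℝ) : Prop :=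
  ∀ i : Fin m, ∀ h ∈ Finset.Icc 1 H, ∀ s, (∀ b, 0 ≤ π i h s b) ∧ ∑ b, π i h s b = 1

/-- `πi` is a Markov policy for the single agent `i`. -/
def IsPolicyI (H : ℕ) {i : Fin m} (πi : ℕ → S → A i → ℝ) : Prop :=
  ∀ h ∈ Finset.Icc 1 H, ∀ s, (∀ b, 0 ≤ πi h s b) ∧ ∑ b, πi h s b = 1

/-- The mean rewards all lie in `[0,1]`. -/
def IsReward (H : ℕ) (R : Fin m → ℕ → S → (∀ i, A i) → ℝ) : Prop :=
  ∀ i, ∀ h ∈ Finset.Icc 1 H, ∀ s a, R i h s a ∈ Set.Icc (0 : ℝ) 1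

/-- `d_h(s,a) = m/2 + (1/2) ∑_i 1(a_i = π†_{i,h}(s))` of the `d`-portion attack. -/
noncomputable def dfun (τ : ∀ i : Fin m, ℕ → S → A i) (h : ℕ) (s : S) (a : ∀ i, A i) : ℝ :=
  (m : ℝ) / 2 + (∑ i, if a i = τ i h s then (1 : ℝ) else 0) / 2

/-- Post-attack mean rewards of the `d`-portion attack (target `τ`, worse policy `τ'`). -/
noncomputable def Rport (R : Fin m → ℕ → S → (∀ i, A i) → ℝ) (τ τ' : ∀ i : Fin m, ℕ → S → A i)
    (i : Fin m) : ℕ → S → (∀ i, A i) → ℝ :=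
  fun h s a => (dfun τ h s a / m) * R i h s (tgtJ τ h s)
    + (1 - dfun τ h s a / m) * R i h s (tgtJ τ' h s)

/-- Post-attack transition probabilities of the `d`-portion attack. -/
noncomputable def Pport (P : ℕ → S → (∀ i, A i) → S → ℝ) (τ τ' : ∀ i : Fin m, ℕ → S → A i) :
    ℕ → S → (∀ i, A i) → S → ℝ :=
  fun h s a s' => (dfun τ h s a / m) * P h s (tgtJ τ h s) s'
    + (1 - dfun τ h s a / m) * P h s (tgtJ τ' h s) s'

/-- `Δ^{†−}_{i,h}(s) = Q^{π†}_{i,h}(s, π†_h(s)) − Q^{π†}_{i,h}(s, π⁻_h(s))` (original game). -/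
noncomputable def Δdag (P : ℕ → S → (∀ i, A i) → S → ℝ) (R : Fin m → ℕ → S → (∀ i, A i) → ℝ)
    (τ τ' : ∀ i : Fin m, ℕ → S → A i) (H : ℕ) (i : Fin m) (h : ℕ) (s : S) : ℝ :=
  Qf P (R i) (jp (detP τ)) H h s (tgtJ τ h s) - Qf P (R i) (jp (detP τ)) H h s (tgtJ τ' h s)

/-- Post-attack mean rewards of the `η`-gap attack; `ΔR i` is the reward spread of agent `i`. -/
noncomputable def Rgap (R : Fin m → ℕ → S → (∀ i, A i) → ℝ) (τ : ∀ i : Fin m, ℕ → S → A i)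
    (η : ℝ) (ΔR : Fin m → ℝ) (H : ℕ) (i : Fin m) : ℕ → S → (∀ i, A i) → ℝ :=
  fun h s a =>
    if a = tgtJ τ h s then R i h s a
    else R i h s (tgtJ τ h s) - (η + ((H - h : ℕ) : ℝ) * ΔR i) * (if a i = τ i h s then 0 else 1)

/-- Post-attack mean rewards of the mixed attack. -/
noncomputable def Rmix (R : Fin m → ℕ → S → (∀ i, A i) → ℝ) (τ : ∀ i : Fin m, ℕ → S → A i)
    (i : Fin m) : ℕ → S → (∀ i, A i) → ℝ :=
  fun h s a => (if a i = τ i h s then (1 : ℝ) else 0) * R i h s (tgtJ τ h s)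

/-- Post-attack transition probabilities of the mixed attack. -/
def Pmix (P : ℕ → S → (∀ i, A i) → S → ℝ) (τ : ∀ i : Fin m, ℕ → S → A i) :
    ℕ → S → (∀ i, A i) → S → ℝ :=
  fun h s a s' => P h s (tgtJ τ h s) s'

/-- Probability of being in state `s'` after `n` steps, starting from `(h, s)` and following
the deterministic policy `τ` under the transitions `P`. -/
noncomputable def reach (P : ℕ → S → (∀ i, A i) → S → ℝ) (τ : ∀ i : Fin m, ℕ → S → A i) :
    ℕ → ℕ → S → S → ℝ
  | 0, _, s, s' => if s' = s then 1 else 0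
  | n + 1, h, s, s' => ∑ t, P h s (tgtJ τ h s) t * reach P τ n (h + 1) t s'

/-- Expected sum of a state-dependent function along the Markov chain `Ps`. -/
noncomputable def SSum (Ps : ℕ → S → S → ℝ) (f : ℕ → S → ℝ) : ℕ → ℕ → S → ℝ
  | 0, _, _ => 0
  | n + 1, h, s => f h s + ∑ s', Ps h s s' * SSum Ps f n (h + 1) s'

end MGAttack

namespace MGAttack

section Helpers

variable {S : Type} [Fintype S] [DecidableEq S]
variable {m : ℕ} {A : Fin m → Type} [∀ i, Fintype (A i)] [∀ i, DecidableEq (A i)]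

lemma sum_prod_pi (f : ∀ j : Fin m, A j → ℝ) :
    ∑ a : ∀ j, A j, ∏ j, f j (a j) = ∏ j, ∑ b, f j b := by
  rw [Finset.prod_univ_sum, Fintype.piFinset_univ]

lemma jp_sum_one (π : ∀ i : Fin m, ℕ → S → A i → ℝ) (h : ℕ) (s : S)
    (hs : ∀ j, ∑ b, π j h s b = 1) : ∑ a, jp π h s a = 1 := by
  simp only [jp]
  rw [sum_prod_pi]
  simp [hs]

lemma jp_ind (π : ∀ i : Fin m, ℕ → S → A i → ℝ) (τ : ∀ i : Fin m, ℕ → S → A i)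
    (i : Fin m) (h : ℕ) (s : S) (hs : ∀ j, ∑ b, π j h s b = 1) :
    ∑ a : ∀ j, A j, jp π h s a * (if a i = τ i h s then (1:ℝ) else 0)
      = π i h s (τ i h s) := by
  have key : ∀ a : ∀ j, A j, jp π h s a * (if a i = τ i h s then (1:ℝ) else 0)
      = ∏ j, (π j h s (a j) *
          (if j = i then (if a j = τ j h s then (1:ℝ) else 0) else 1)) := by
    intro a
    rw [Finset.prod_mul_distrib]
    congr 1
    rw [Finset.prod_ite_eq' Finset.univ i
      (fun j => if a j = τ j h s then (1:ℝ) else 0)]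
    simp
  simp only [key]
  rw [sum_prod_pi
    (fun j b => π j h s b * (if j = i then (if b = τ j h s then (1:ℝ) else 0) else 1))]
  rw [Finset.prod_eq_single i]
  · simp [Finset.sum_ite_eq', mul_ite]
  · intro j _ hj
    simp [hj, hs j]
  · simp

lemma SSum_congr (Ps : ℕ → S → S → ℝ) (F G : ℕ → S → ℝ) (n : ℕ) :
    ∀ (h : ℕ) (s : S), (∀ h', h ≤ h' → h' < h + n → ∀ s', F h' s' = G h' s') →
    SSum Ps F n h s = SSum Ps G n h s := by
  induction n with
  | zero => intro h s _; rfl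
  | succ n ih =>
    intro h s hFG
    simp only [SSum]
    rw [hFG h le_rfl (by omega)]
    congr 1
    refine Finset.sum_congr rfl fun s' _ => ?_
    rw [ih (h+1) s' (fun h' h1 h2 s'' => hFG h' (by omega) (by omega) s'')]

lemma SSum_mono (Ps : ℕ → S → S → ℝ) (F G : ℕ → S → ℝ) (n : ℕ) :
    ∀ (h : ℕ) (s : S), (∀ h', h ≤ h' → h' < h + n → ∀ s' s'', 0 ≤ Ps h' s' s'') →
    (∀ h', h ≤ h' → h' < h + n → ∀ s', F h' s' ≤ G h' s') →
    SSum Ps F n h s ≤ SSum Ps G n h s := by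
  induction n with
  | zero => intro h s _ _; exact le_rfl
  | succ n ih =>
    intro h s hP hFG
    simp only [SSum]
    refine add_le_add (hFG h le_rfl (by omega) s) ?_
    refine Finset.sum_le_sum fun s' _ => ?_
    refine mul_le_mul_of_nonneg_left ?_ (hP h le_rfl (by omega) s s')
    exact ih (h+1) s' (fun h' h1 h2 => hP h' (by omega) (by omega))
      (fun h' h1 h2 => hFG h' (by omega) (by omega))

lemma SSum_sub (Ps : ℕ → S → S → ℝ) (F G : ℕ → S → ℝ) (n : ℕ) :
    ∀ (h : ℕ) (s : S), SSum Ps (fun h s => F h s - G h s) n h s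
      = SSum Ps F n h s - SSum Ps G n h s := by
  induction n with
  | zero => intro h s; simp [SSum]
  | succ n ih =>
    intro h s
    simp only [SSum, ih, mul_sub, Finset.sum_sub_distrib]
    ring

lemma SSum_const_mul (Ps : ℕ → S → S → ℝ) (c : ℝ) (F : ℕ → S → ℝ) (n : ℕ) :
    ∀ (h : ℕ) (s : S), SSum Ps (fun h s => c * F h s) n h s = c * SSum Ps F n h s := by
  induction n with
  | zero => intro h s; simp [SSum]
  | succ n ih =>
    intro h s
    simp only [SSum, ih]
    rw [mul_add, Finset.mul_sum]
    congr 1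
    exact Finset.sum_congr rfl fun s' _ => by ring

lemma SSum_sum (Ps : ℕ → S → S → ℝ) (F : Fin m → ℕ → S → ℝ) (n : ℕ) :
    ∀ (h : ℕ) (s : S), SSum Ps (fun h s => ∑ i, F i h s) n h s
      = ∑ i, SSum Ps (F i) n h s := by
  induction n with
  | zero => intro h s; simp [SSum]
  | succ n ih =>
    intro h s
    simp only [SSum, ih, Finset.mul_sum]
    rw [Finset.sum_comm, Finset.sum_add_distrib]

lemma VA_mix_eq (P : ℕ → S → (∀ i, A i) → S → ℝ) (τ : ∀ i : Fin m, ℕ → S → A i)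
    (f : ℕ → S → (∀ i, A i) → ℝ) (π : ℕ → S → (∀ i, A i) → ℝ) (n : ℕ) :
    ∀ (h : ℕ) (s : S), (∀ h', h ≤ h' → h' < h + n → ∀ s', ∑ a, π h' s' a = 1) →
    VA (Pmix P τ) f π n h s
      = SSum (fun h s s' => P h s (tgtJ τ h s) s')
          (fun h s => ∑ a, π h s a * f h s a) n h s := by
  induction n with
  | zero => intro h s _; rfl
  | succ n ih =>
    intro h s hπ
    simp only [VA, SSum, Pmix]
    have key : ∀ a : ∀ i, A i,
        π h s a * (f h s a + ∑ s', P h s (tgtJ τ h s) s' * VA (Pmix P τ) f π n (h+1) s')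
        = π h s a * f h s a
          + π h s a * ∑ s', P h s (tgtJ τ h s) s' * VA (Pmix P τ) f π n (h+1) s' :=
      fun a => mul_add _ _ _
    rw [Finset.sum_congr rfl fun a _ => key a, Finset.sum_add_distrib, ← Finset.sum_mul,
      hπ h le_rfl (by omega), one_mul]
    congr 1
    refine Finset.sum_congr rfl fun s' _ => ?_
    rw [ih (h+1) s' (fun h' h1 h2 s'' => hπ h' (by omega) (by omega) s'')]

end Helpers

/-- Theorem 8 (mixed attack): with `R_min = min_{i,h,s} R_{i,h}(s,π†_h(s)) > 0`, if every
agent's best-in-hindsight regret in the post-attack game is at most `𝓡(T)` with `T = KH`,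
then the expected attack loss is at most `m𝓡(T)/R_min` and the expected attack cost is at
most `2m𝓡(T)/R_min`.  The per-step expected cost of the mixed attack is, for each agent
deviating from the target action, `1` (the action change) plus the mean of the realized
reward `R_{i,h}(s,π†_h(s))` (overriding the reward to `0`). -/
theorem stmt16 {S : Type} [Fintype S] [DecidableEq S]
    {m : ℕ} {A : Fin m → Type} [∀ i, Fintype (A i)] [∀ i, DecidableEq (A i)]
    (H : ℕ) (hH : 1 ≤ H) (hm : 1 ≤ m)
    (P : ℕ → S → (∀ i, A i) → S → ℝ) (hP : IsKernel H P)
    (R : Fin m → ℕ → S → (∀ i, A i) → ℝ) (hR : IsReward H R)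
    (τ : ∀ i : Fin m, ℕ → S → A i)
    (Rm : ℝ)
    (hRm : IsLeast {x : ℝ | ∃ i : Fin m, ∃ h ∈ Finset.Icc 1 H, ∃ s : S,
        x = R i h s (tgtJ τ h s)} Rm)
    (hRmpos : 0 < Rm)
    -- the K episodes
    (K : ℕ) (πk : Fin K → ∀ j : Fin m, ℕ → S → A j → ℝ) (hπk : ∀ k, IsPolicy H (πk k))
    (s₁ : Fin K → S) (𝓡 : ℕ → ℝ)
    -- sub-linear best-in-hindsight regret bound in the post-attack game
    (hreg : ∀ i : Fin m, ∀ πi' : ℕ → S → A i → ℝ, IsPolicyI H πi' →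
      ∑ k : Fin K,
          (Vf (Pmix P τ) (Rmix R τ i) (jp (Function.update (πk k) i πi')) H 1 (s₁ k)
            - Vf (Pmix P τ) (Rmix R τ i) (jp (πk k)) H 1 (s₁ k)) ≤ 𝓡 (K * H)) :
    -- expected attack loss (Loss1) bound
    (∑ k : Fin K, VA (Pmix P τ)
        (fun h s a => ∑ j : Fin m, (if a j = τ j h s then (0 : ℝ) else 1))
        (jp (πk k)) H 1 (s₁ k)
      ≤ m * 𝓡 (K * H) / Rm)
    -- expected attack cost bound
    ∧ (∑ k : Fin K, VA (Pmix P τ)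
        (fun h s a => ∑ j : Fin m,
          (if a j = τ j h s then (0 : ℝ) else 1 + R j h s (tgtJ τ h s)))
        (jp (πk k)) H 1 (s₁ k)
      ≤ 2 * m * 𝓡 (K * H) / Rm) := by
  classical
  have hmem : ∀ h', 1 ≤ h' → h' < 1 + H → h' ∈ Finset.Icc 1 H := by
    intro h' h1 h2; exact Finset.mem_Icc.mpr ⟨h1, by omega⟩
  have hRlow : ∀ h ∈ Finset.Icc 1 H, ∀ (s : S) (i : Fin m), Rm ≤ R i h s (tgtJ τ h s) :=
    fun h hh s i => hRm.2 ⟨i, h, hh, s, rfl⟩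
  have hRub : ∀ h ∈ Finset.Icc 1 H, ∀ (s : S) (i : Fin m), R i h s (tgtJ τ h s) ≤ 1 :=
    fun h hh s i => (hR i h hh s _).2
  set Pb : ℕ → S → S → ℝ := fun h s s' => P h s (tgtJ τ h s) s' with hPb
  have hPb0 : ∀ h', 1 ≤ h' → h' < 1 + H → ∀ (s' : S) (s'' : S), 0 ≤ Pb h' s' s'' :=
    fun h' h1 h2 s' s'' => ((hP h' (hmem h' h1 h2) s' (tgtJ τ h' s')).1 s'')
  set p : Fin K → Fin m → ℕ → S → ℝ := fun k j h s => πk k j h s (τ j h s) with hp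
  set L : Fin K → Fin m → ℝ :=
    fun k j => SSum Pb (fun h s => 1 - p k j h s) H 1 (s₁ k) with hL
  have hsum1 : ∀ (k : Fin K) (j : Fin m), ∀ h', 1 ≤ h' → h' < 1 + H → ∀ s',
      ∑ b, πk k j h' s' b = 1 := fun k j h' h1 h2 s' => ((hπk k) j h' (hmem h' h1 h2) s').2
  have hnn : ∀ (k : Fin K) (j : Fin m), ∀ h', 1 ≤ h' → h' < 1 + H → ∀ s' b,
      0 ≤ πk k j h' s' b := fun k j h' h1 h2 s' => ((hπk k) j h' (hmem h' h1 h2) s').1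
  have hjp1 : ∀ (k : Fin K), ∀ h', 1 ≤ h' → h' < 1 + H → ∀ s',
      ∑ a, jp (πk k) h' s' a = 1 :=
    fun k h' h1 h2 s' => jp_sum_one _ _ _ (fun j => hsum1 k j h' h1 h2 s')
  have hjpnn : ∀ (k : Fin K), ∀ h', 1 ≤ h' → h' < 1 + H → ∀ s' (a : ∀ j, A j),
      0 ≤ jp (πk k) h' s' a :=
    fun k h' h1 h2 s' a => Finset.prod_nonneg fun j _ => hnn k j h' h1 h2 s' (a j)
  have hple : ∀ (k : Fin K) (j : Fin m), ∀ h', 1 ≤ h' → h' < 1 + H → ∀ s',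
      p k j h' s' ≤ 1 := by
    intro k j h' h1 h2 s'
    calc p k j h' s' ≤ ∑ b, πk k j h' s' b :=
          Finset.single_le_sum (fun b _ => hnn k j h' h1 h2 s' b) (Finset.mem_univ _)
      _ = 1 := hsum1 k j h' h1 h2 s'
  have hstep : ∀ (k : Fin K) (j : Fin m), ∀ h', 1 ≤ h' → h' < 1 + H → ∀ s',
      ∑ a, jp (πk k) h' s' a * (if a j = τ j h' s' then (0:ℝ) else 1)
        = 1 - p k j h' s' := by
    intro k j h' h1 h2 s'
    have e1 : ∀ a : ∀ i, A i, jp (πk k) h' s' a * (if a j = τ j h' s' then (0:ℝ) else 1)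
        = jp (πk k) h' s' a
          - jp (πk k) h' s' a * (if a j = τ j h' s' then (1:ℝ) else 0) := by
      intro a; by_cases hc : a j = τ j h' s' <;> simp [hc]
    rw [Finset.sum_congr rfl fun a _ => e1 a, Finset.sum_sub_distrib,
      hjp1 k h' h1 h2 s', jp_ind _ _ _ _ _ (fun j => hsum1 k j h' h1 h2 s')]
  -- loss decomposition
  have hSg : ∀ k : Fin K,
      SSum Pb (fun h s => ∑ a, jp (πk k) h s a *
          ∑ j : Fin m, (if a j = τ j h s then (0:ℝ) else 1)) H 1 (s₁ k)
        = ∑ j, L k j := by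
    intro k
    rw [SSum_congr Pb _ (fun h s => ∑ j : Fin m, (1 - p k j h s)) H 1 (s₁ k) ?_]
    · exact SSum_sum Pb (fun j h s => 1 - p k j h s) H 1 (s₁ k)
    · intro h' h1 h2 s'
      calc (∑ a, jp (πk k) h' s' a * ∑ j : Fin m, (if a j = τ j h' s' then (0:ℝ) else 1))
          = ∑ j : Fin m, ∑ a, jp (πk k) h' s' a
              * (if a j = τ j h' s' then (0:ℝ) else 1) := by
            simp_rw [Finset.mul_sum]; exact Finset.sum_comm
        _ = ∑ j : Fin m, (1 - p k j h' s') :=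
            Finset.sum_congr rfl fun j _ => hstep k j h' h1 h2 s'
  have hLoss : ∀ k : Fin K,
      VA (Pmix P τ) (fun h s a => ∑ j : Fin m, (if a j = τ j h s then (0 : ℝ) else 1))
        (jp (πk k)) H 1 (s₁ k) = ∑ j, L k j := by
    intro k
    rw [VA_mix_eq P τ _ _ H 1 (s₁ k) (fun h' h1 h2 s' => hjp1 k h' h1 h2 s')]
    exact hSg k
  -- regret lower bound
  have hreg' : ∀ i : Fin m, Rm * ∑ k, L k i ≤ 𝓡 (K * H) := by
    intro i
    set πi' : ℕ → S → A i → ℝ := fun h s b => if b = τ i h s then 1 else 0 with hπi'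
    have hpolI : IsPolicyI H πi' := by
      intro h _ s
      constructor
      · intro b; dsimp [πi']; split <;> norm_num
      · simp [πi']
    have hdiff : ∀ k : Fin K,
        Rm * L k i ≤
          Vf (Pmix P τ) (Rmix R τ i) (jp (Function.update (πk k) i πi')) H 1 (s₁ k)
            - Vf (Pmix P τ) (Rmix R τ i) (jp (πk k)) H 1 (s₁ k) := by
      intro k
      have hupsum : ∀ h', 1 ≤ h' → h' < 1 + H → ∀ s' (j : Fin m),
          ∑ b, Function.update (πk k) i πi' j h' s' b = 1 := by
        intro h' h1 h2 s' j
        by_cases hj : j = i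
        · subst hj; rw [Function.update_self]; simp [πi']
        · rw [Function.update_of_ne hj]; exact hsum1 k j h' h1 h2 s'
      have hVf : ∀ (π : ℕ → S → (∀ i, A i) → ℝ),
          Vf (Pmix P τ) (Rmix R τ i) π H 1 (s₁ k)
            = VA (Pmix P τ) (Rmix R τ i) π H 1 (s₁ k) := by
        intro π; simp [Vf]
      rw [hVf, hVf,
        VA_mix_eq P τ _ _ H 1 (s₁ k) (fun h' h1 h2 s' =>
          jp_sum_one _ _ _ (fun j => hupsum h' h1 h2 s' j)),
        VA_mix_eq P τ _ _ H 1 (s₁ k) (fun h' h1 h2 s' => hjp1 k h' h1 h2 s'),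
        ← SSum_sub]
      have hRm_eq : Rm * L k i = SSum Pb (fun h s => Rm * (1 - p k i h s)) H 1 (s₁ k) :=
        (SSum_const_mul Pb Rm _ H 1 (s₁ k)).symm
      rw [hRm_eq]
      apply SSum_mono Pb _ _ H 1 (s₁ k) hPb0
      intro h' h1 h2 s'
      have e_up : ∑ a, jp (Function.update (πk k) i πi') h' s' a * Rmix R τ i h' s' a
          = R i h' s' (tgtJ τ h' s') := by
        have e : ∀ a : ∀ j, A j,
            jp (Function.update (πk k) i πi') h' s' a * Rmix R τ i h' s' a
            = (jp (Function.update (πk k) i πi') h' s' a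
                * (if a i = τ i h' s' then (1:ℝ) else 0)) * R i h' s' (tgtJ τ h' s') := by
          intro a; simp only [Rmix]; ring
        rw [Finset.sum_congr rfl fun a _ => e a, ← Finset.sum_mul,
          jp_ind _ τ i h' s' (fun j => hupsum h' h1 h2 s' j)]
        rw [Function.update_self]
        simp [πi']
      have e_pi : ∑ a, jp (πk k) h' s' a * Rmix R τ i h' s' a
          = p k i h' s' * R i h' s' (tgtJ τ h' s') := by
        have e : ∀ a : ∀ j, A j, jp (πk k) h' s' a * Rmix R τ i h' s' a
            = (jp (πk k) h' s' a
                * (if a i = τ i h' s' then (1:ℝ) else 0)) * R i h' s' (tgtJ τ h' s') := by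
          intro a; simp only [Rmix]; ring
        rw [Finset.sum_congr rfl fun a _ => e a, ← Finset.sum_mul,
          jp_ind _ τ i h' s' (fun j => hsum1 k j h' h1 h2 s')]
      rw [e_up, e_pi]
      have h1p : 0 ≤ 1 - p k i h' s' := by linarith [hple k i h' h1 h2 s']
      have hlow := hRlow h' (hmem h' h1 h2) s' i
      nlinarith
    calc (Rm * ∑ k, L k i) = ∑ k, Rm * L k i := Finset.mul_sum ..
      _ ≤ ∑ k : Fin K,
          (Vf (Pmix P τ) (Rmix R τ i) (jp (Function.update (πk k) i πi')) H 1 (s₁ k)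
            - Vf (Pmix P τ) (Rmix R τ i) (jp (πk k)) H 1 (s₁ k)) :=
          Finset.sum_le_sum fun k _ => hdiff k
      _ ≤ 𝓡 (K * H) := hreg i πi' hpolI
  have hLle : ∀ i : Fin m, ∑ k, L k i ≤ 𝓡 (K * H) / Rm := by
    intro i
    rw [le_div_iff₀ hRmpos, mul_comm]
    exact hreg' i
  have hmain : ∑ k : Fin K, ∑ j, L k j ≤ m * 𝓡 (K * H) / Rm := by
    rw [Finset.sum_comm]
    calc (∑ j : Fin m, ∑ k, L k j) ≤ ∑ _j : Fin m, 𝓡 (K * H) / Rm :=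
          Finset.sum_le_sum fun j _ => hLle j
      _ = m * 𝓡 (K * H) / Rm := by
          rw [Finset.sum_const, Finset.card_univ, Fintype.card_fin, nsmul_eq_mul]
          ring
  constructor
  · calc (∑ k : Fin K, VA (Pmix P τ)
        (fun h s a => ∑ j : Fin m, (if a j = τ j h s then (0 : ℝ) else 1))
        (jp (πk k)) H 1 (s₁ k))
        = ∑ k : Fin K, ∑ j, L k j := Finset.sum_congr rfl fun k _ => hLoss k
      _ ≤ m * 𝓡 (K * H) / Rm := hmain
  · have hCost : ∀ k : Fin K,
        VA (Pmix P τ) (fun h s a => ∑ j : Fin m,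
            (if a j = τ j h s then (0:ℝ) else 1 + R j h s (tgtJ τ h s)))
          (jp (πk k)) H 1 (s₁ k) ≤ 2 * ∑ j, L k j := by
      intro k
      rw [VA_mix_eq P τ _ _ H 1 (s₁ k) (fun h' h1 h2 s' => hjp1 k h' h1 h2 s')]
      calc SSum Pb (fun h s => ∑ a, jp (πk k) h s a *
              ∑ j : Fin m, (if a j = τ j h s then (0:ℝ) else 1 + R j h s (tgtJ τ h s)))
            H 1 (s₁ k)
          ≤ SSum Pb (fun h s => 2 * ∑ a, jp (πk k) h s a *
              ∑ j : Fin m, (if a j = τ j h s then (0:ℝ) else 1)) H 1 (s₁ k) := by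
            apply SSum_mono Pb _ _ H 1 (s₁ k) hPb0
            intro h' h1 h2 s'
            calc (∑ a, jp (πk k) h' s' a *
                  ∑ j : Fin m, (if a j = τ j h' s' then (0:ℝ) else 1 + R j h' s' (tgtJ τ h' s')))
                ≤ ∑ a, jp (πk k) h' s' a *
                    (2 * ∑ j : Fin m, (if a j = τ j h' s' then (0:ℝ) else 1)) := by
                  refine Finset.sum_le_sum fun a _ => ?_
                  refine mul_le_mul_of_nonneg_left ?_ (hjpnn k h' h1 h2 s' a)
                  rw [Finset.mul_sum]
                  refine Finset.sum_le_sum fun j _ => ?_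
                  by_cases hc : a j = τ j h' s'
                  · simp [hc]
                  · have := hRub h' (hmem h' h1 h2) s' j
                    simp only [hc, if_neg hc, if_false]
                    linarith
              _ = 2 * ∑ a, jp (πk k) h' s' a *
                    ∑ j : Fin m, (if a j = τ j h' s' then (0:ℝ) else 1) := by
                  rw [Finset.mul_sum]
                  exact Finset.sum_congr rfl fun a _ => by ring
        _ = 2 * ∑ j, L k j := by
            rw [SSum_const_mul Pb 2 _ H 1 (s₁ k), hSg k]
    calc (∑ k : Fin K, VA (Pmix P τ)
          (fun h s a => ∑ j : Fin m,
            (if a j = τ j h s then (0 : ℝ) else 1 + R j h s (tgtJ τ h s)))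
          (jp (πk k)) H 1 (s₁ k))
        ≤ ∑ k : Fin K, 2 * ∑ j, L k j := Finset.sum_le_sum fun k _ => hCost k
      _ = 2 * ∑ k : Fin K, ∑ j, L k j := by rw [← Finset.mul_sum]
      _ ≤ 2 * (m * 𝓡 (K * H) / Rm) := by linarith [hmain]
      _ = 2 * m * 𝓡 (K * H) / Rm := by ring

end MGAttack
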